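/- For every t ∈ ℂ with t ≠ 0, the polynomial g = x² + x·w² + z²·w − t·w³ ∈ ℂ[x,z,w] has local Milnor number 4 at the origin: dim_ℂ O/J(g)·O = 4, where O = ℂ[x,z,w]_{(x,z,w)} is the localization of ℂ[x,z,w] at the maximal ideal of the origin and J(g) is the Jacobian ideal of g. (This is the generic D₄ singularity at infinity of the compactified fibres 𝕐_{0,t}, t ≠ 0, of f₀ = x²y + x + z² in the paper's Example 8.6, computed in the affine chart Y = 1.) -/

import Mathlib

open MvPolynomial

noncomputable section

/-- The maximal ideal of the origin in ℂ[x,z,w] (variables: X 0 = x, X 1 = z, X 2 = w),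
    realized as the kernel of evaluation at 0. -/
def mOrigin₃ : Ideal (MvPolynomial (Fin 3) ℂ) := RingHom.ker (eval (0 : Fin 3 → ℂ))

instance : mOrigin₃.IsMaximal :=
  RingHom.ker_isMaximal_of_surjective _ (fun r => ⟨C r, by simp⟩)

/-- g = x² + x·w² + z²·w − t·w³ (variables: X 0 = x, X 1 = z, X 2 = w). -/
def g₈₆' (t : ℂ) : MvPolynomial (Fin 3) ℂ :=
  X 0 ^ 2 + X 0 * X 2 ^ 2 + X 1 ^ 2 * X 2 - C t * X 2 ^ 3

/-!
The Jacobian ideal `J = (2x + w², 2zw, 2xw + z² - 3tw²)` does not contain `w³`, but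
`(2w + 6t) w³ ∈ J` and `2w + 6t` is a unit at the origin when `t ≠ 0`. So `J·O = Q·O` for
`Q = J + (w³)`. Now `x², z³, w³ ∈ Q`, so `Q` is primary to the maximal ideal of the origin and
`O/Q·O = ℂ[x,z,w]/Q`. The latter has basis `1, z, w, x`: these span, since every other monomial
lies in `Q` or is congruent modulo `Q` to a multiple of `x`, and they are independent, since the
functionals `ev₀`, `ev₀ ∘ ∂_z`, `ev₀ ∘ ∂_w`, `ev₀ ∘ (∂_w² - ∂_x + 3t ∂_z²)` vanish on `Q`.
-/

theorem MvPolynomial.ker_eval_zero {σ R : Type*} [CommRing R] :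
    RingHom.ker (eval (0 : σ → R)) = idealOfVars σ R := by
  ext p
  rw [RingHom.mem_ker, eval_zero, ← pow_one (idealOfVars σ R), mem_pow_idealOfVars_iff']
  simp only [Nat.lt_one_iff, Finsupp.degree_eq_zero_iff, forall_eq]
  rfl

theorem finrank_quotient_map_of_le_radical {k R S : Type*} [Field k] [CommRing R] [Algebra k R]
    [IsNoetherianRing R] (m : Ideal R) [m.IsMaximal] [CommRing S] [Algebra R S]
    [IsLocalization.AtPrime S m] [Algebra k S] [IsScalarTower k R S]
    {I : Ideal R} (hI : m ≤ I.radical) :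
    Module.finrank k (S ⧸ I.map (algebraMap R S)) = Module.finrank k (R ⧸ I) := by
  obtain ⟨n, hn⟩ := Ideal.exists_pow_le_of_le_radical_of_fg hI (IsNoetherian.noetherian m)
  have hunits : Algebra.algebraMapSubmonoid (R ⧸ I) m.primeCompl ≤ IsUnit.submonoid (R ⧸ I) := by
    rintro _ ⟨y, hy, rfl⟩
    exact (Ideal.Quotient.isUnit_mk_pow_of_notMem m hy).map (Ideal.Quotient.factor hn)
  have : IsScalarTower k (R ⧸ I) (S ⧸ I.map (algebraMap R S)) :=
    IsScalarTower.of_algebraMap_eq fun c => by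
      rw [IsScalarTower.algebraMap_apply k R (R ⧸ I),
        IsScalarTower.algebraMap_apply k R (S ⧸ I.map (algebraMap R S))]
      rfl
  exact ((IsLocalization.atUnits _ _ hunits).toLinearEquiv.restrictScalars k).finrank_eq.symm

namespace Example86

local notation "𝔸" => MvPolynomial (Fin 3) ℂ

variable (t : ℂ)

theorem pderiv_zero_g₈₆' : pderiv 0 (g₈₆' t) = 2 * X 0 + X 2 ^ 2 := by
  simp [g₈₆']

theorem pderiv_one_g₈₆' : pderiv 1 (g₈₆' t) = 2 * X 1 * X 2 := by
  simp [g₈₆', mul_comm, mul_left_comm]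

theorem pderiv_two_g₈₆' : pderiv 2 (g₈₆' t) = 2 * X 0 * X 2 + X 1 ^ 2 - 3 * C t * X 2 ^ 2 := by
  simp [g₈₆', mul_comm, mul_left_comm, mul_assoc]

def jacobian : Ideal 𝔸 :=
  Ideal.span {2 * X 0 + X 2 ^ 2, 2 * X 1 * X 2, 2 * X 0 * X 2 + X 1 ^ 2 - 3 * C t * X 2 ^ 2}

theorem span_pderiv_g₈₆' :
    Ideal.span {pderiv 0 (g₈₆' t), pderiv 1 (g₈₆' t), pderiv 2 (g₈₆' t)} = jacobian t := by
  rw [pderiv_zero_g₈₆', pderiv_one_g₈₆', pderiv_two_g₈₆', jacobian]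

/-- Unlike `jacobian t`, which also vanishes at the second critical point `(-9t²/2, 0, -3t)`,
this ideal is supported at the origin alone. -/
def augmentedJacobian : Ideal 𝔸 :=
  jacobian t ⊔ Ideal.span {X 2 ^ 3}

theorem map_augmentedJacobian (ht : t ≠ 0) :
    (augmentedJacobian t).map (algebraMap 𝔸 (Localization.AtPrime mOrigin₃)) =
      (jacobian t).map (algebraMap 𝔸 (Localization.AtPrime mOrigin₃)) := by
  rw [augmentedJacobian, Ideal.map_sup, Ideal.map_span, Set.image_singleton, sup_eq_left,
    Ideal.span_le, Set.singleton_subset_iff]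
  refine (IsLocalization.algebraMap_mem_map_algebraMap_iff mOrigin₃.primeCompl _ _ _).mpr
    ⟨2 * X 2 + 6 * C t, ?_, ?_⟩
  · simpa [mOrigin₃, Ideal.primeCompl, RingHom.mem_ker, map_ofNat] using ht
  · have e : ((2 * X 2 + 6 * C t) * X 2 ^ 3 : 𝔸) = 2 * X 2 ^ 2 * (2 * X 0 + X 2 ^ 2) +
        X 1 * (2 * X 1 * X 2) - 2 * X 2 * (2 * X 0 * X 2 + X 1 ^ 2 - 3 * C t * X 2 ^ 2) := by
      ring
    rw [e, jacobian]
    refine Ideal.sub_mem _ (Ideal.add_mem _ ?_ ?_) ?_ <;>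
      exact Ideal.mul_mem_left _ _ (Ideal.subset_span (by simp))

theorem mem_augmentedJacobian_of_eq {p : 𝔸} (n : ℕ) (c₁ c₂ c₃ c₄ : 𝔸)
    (h : 2 ^ n * p = c₁ * (2 * X 0 + X 2 ^ 2) + c₂ * (2 * X 1 * X 2) +
      c₃ * (2 * X 0 * X 2 + X 1 ^ 2 - 3 * C t * X 2 ^ 2) + c₄ * X 2 ^ 3) :
    p ∈ augmentedJacobian t := by
  have h2 : IsUnit (2 : 𝔸) := by
    simpa only [map_ofNat] using (IsUnit.mk0 (2 : ℂ) two_ne_zero).map C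
  rw [← Ideal.unit_mul_mem_iff_mem _ (h2.pow n), h, augmentedJacobian]
  refine Ideal.add_mem _ (Ideal.mem_sup_left ?_) (Ideal.mem_sup_right ?_)
  · refine Ideal.add_mem _ (Ideal.add_mem _ ?_ ?_) ?_ <;>
      exact Ideal.mul_mem_left _ _ (Ideal.subset_span (by simp))
  · exact Ideal.mul_mem_left _ _ (Ideal.subset_span rfl)

theorem X_zero_sq_mem : (X 0 ^ 2 : 𝔸) ∈ augmentedJacobian t :=
  mem_augmentedJacobian_of_eq t 2 (2 * X 0 - X 2 ^ 2) 0 0 (X 2) (by ring)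

theorem X_zero_mul_X_one_mem : (X 0 * X 1 : 𝔸) ∈ augmentedJacobian t :=
  mem_augmentedJacobian_of_eq t 2 (2 * X 1) (-X 2) 0 0 (by ring)

theorem X_zero_mul_X_two_mem : (X 0 * X 2 : 𝔸) ∈ augmentedJacobian t :=
  mem_augmentedJacobian_of_eq t 1 (X 2) 0 0 (-1) (by ring)

theorem X_one_mul_X_two_mem : (X 1 * X 2 : 𝔸) ∈ augmentedJacobian t :=
  mem_augmentedJacobian_of_eq t 1 0 1 0 0 (by ring)

theorem X_one_pow_three_mem : (X 1 ^ 3 : 𝔸) ∈ augmentedJacobian t :=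
  mem_augmentedJacobian_of_eq t 1 0 (3 * C t * X 2 - 2 * X 0) (2 * X 1) 0 (by ring)

theorem X_two_pow_three_mem : (X 2 ^ 3 : 𝔸) ∈ augmentedJacobian t :=
  mem_augmentedJacobian_of_eq t 0 0 0 0 1 (by ring)

theorem X_one_sq_add_mem : (X 1 ^ 2 + 6 * C t * X 0 : 𝔸) ∈ augmentedJacobian t :=
  mem_augmentedJacobian_of_eq t 0 (3 * C t - X 2) 0 1 1 (by ring)

theorem X_two_sq_add_mem : (X 2 ^ 2 + 2 * X 0 : 𝔸) ∈ augmentedJacobian t :=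
  mem_augmentedJacobian_of_eq t 0 1 0 0 0 (by ring)

theorem mOrigin₃_le_radical : mOrigin₃ ≤ (augmentedJacobian t).radical := by
  rw [mOrigin₃, ker_eval_zero, idealOfVars, Ideal.span_le, Set.range_subset_iff]
  intro i
  fin_cases i <;> simp only [Fin.isValue, Fin.zero_eta, Fin.mk_one, Fin.reduceFinMk]
  · exact ⟨2, X_zero_sq_mem t⟩
  · exact ⟨3, X_one_pow_three_mem t⟩
  · exact ⟨3, X_two_pow_three_mem t⟩

/-- Macaulay's inverse system of the Milnor algebra: by the Leibniz rule, the common kernel of these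
four functionals is an ideal. -/
def dualKernel : Ideal 𝔸 where
  carrier := {p | eval 0 p = 0 ∧ eval 0 (pderiv 1 p) = 0 ∧ eval 0 (pderiv 2 p) = 0 ∧
    eval 0 (pderiv 2 (pderiv 2 p) - pderiv 0 p + 3 * C t * pderiv 1 (pderiv 1 p)) = 0}
  add_mem' := by
    rintro p q ⟨hp₀, hp₁, hp₂, hp₃⟩ ⟨hq₀, hq₁, hq₂, hq₃⟩
    simp only [Set.mem_ofPred_eq, map_add, map_sub, map_mul] at *
    refine ⟨by rw [hp₀, hq₀, add_zero], by rw [hp₁, hq₁, add_zero], by rw [hp₂, hq₂, add_zero], ?_⟩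
    linear_combination hp₃ + hq₃
  zero_mem' := by simp
  smul_mem' := by
    rintro a p ⟨h₀, h₁, h₂, h₃⟩
    simp only [Set.mem_ofPred_eq, smul_eq_mul, pderiv_mul, map_add, map_sub, map_mul, eval_C,
      map_ofNat] at *
    refine ⟨by rw [h₀, mul_zero], by rw [h₀, h₁]; ring, by rw [h₀, h₂]; ring, ?_⟩
    linear_combination (eval 0 (pderiv 2 (pderiv 2 a)) - eval 0 (pderiv 0 a) +
      3 * t * eval 0 (pderiv 1 (pderiv 1 a))) * h₀ + eval 0 a * h₃ +
      2 * eval 0 (pderiv 2 a) * h₂ + 6 * t * eval 0 (pderiv 1 a) * h₁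

theorem augmentedJacobian_le_dualKernel : augmentedJacobian t ≤ dualKernel t := by
  refine sup_le (Ideal.span_le.mpr ?_) (Ideal.span_le.mpr ?_) <;>
    simp [Set.insert_subset_iff, dualKernel, map_ofNat]

def milnorMonomials : Fin 4 → 𝔸 := ![1, X 1, X 2, X 0]

abbrev milnorBasis : Fin 4 → 𝔸 ⧸ augmentedJacobian t :=
  Ideal.Quotient.mkₐ ℂ _ ∘ milnorMonomials

theorem linearIndependent_milnorBasis : LinearIndependent ℂ (milnorBasis t) := by
  rw [Fintype.linearIndependent_iff]
  intro c hc
  have hsum : ∑ i, c i • milnorBasis t i =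
      Ideal.Quotient.mkₐ ℂ _ (∑ i, c i • milnorMonomials i) := by
    simp [map_sum]
  rw [hsum, Ideal.Quotient.mkₐ_eq_mk, Ideal.Quotient.eq_zero_iff_mem] at hc
  obtain ⟨h₀, h₁, h₂, h₃⟩ := augmentedJacobian_le_dualKernel t hc
  intro i
  fin_cases i <;> simp_all [milnorMonomials, Fin.sum_univ_four, smul_eq_C_mul]

theorem mkₐ_mem_span_milnorBasis {p : 𝔸} (i : Fin 4) (c : ℂ)
    (h : p - C c * milnorMonomials i ∈ augmentedJacobian t) :
    Ideal.Quotient.mkₐ ℂ _ p ∈ Submodule.span ℂ (Set.range (milnorBasis t)) := by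
  have hp : Ideal.Quotient.mkₐ ℂ (augmentedJacobian t) (p - c • milnorMonomials i) = 0 := by
    rwa [smul_eq_C_mul, Ideal.Quotient.mkₐ_eq_mk, Ideal.Quotient.eq_zero_iff_mem]
  rw [map_sub, map_smul, sub_eq_zero] at hp
  rw [hp]
  exact Submodule.smul_mem _ _ (Submodule.subset_span ⟨i, rfl⟩)

theorem mkₐ_mem_span_milnorBasis_of_mem {p : 𝔸} (h : p ∈ augmentedJacobian t) :
    Ideal.Quotient.mkₐ ℂ _ p ∈ Submodule.span ℂ (Set.range (milnorBasis t)) :=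
  mkₐ_mem_span_milnorBasis t 0 0 (by rwa [C_0, zero_mul, sub_zero])

theorem mkₐ_monomial_mem_span_milnorBasis (a b c : ℕ) :
    Ideal.Quotient.mkₐ ℂ _ (X 0 ^ a * X 1 ^ b * X 2 ^ c) ∈
      Submodule.span ℂ (Set.range (milnorBasis t)) := by
  match a, b, c with
  | a + 2, b, c =>
    exact mkₐ_mem_span_milnorBasis_of_mem t
      (Ideal.mem_of_dvd _ ⟨X 0 ^ a * X 1 ^ b * X 2 ^ c, by ring⟩ (X_zero_sq_mem t))
  | 1, b + 1, c =>
    exact mkₐ_mem_span_milnorBasis_of_mem t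
      (Ideal.mem_of_dvd _ ⟨X 1 ^ b * X 2 ^ c, by ring⟩ (X_zero_mul_X_one_mem t))
  | 1, 0, c + 1 =>
    exact mkₐ_mem_span_milnorBasis_of_mem t
      (Ideal.mem_of_dvd _ ⟨X 2 ^ c, by ring⟩ (X_zero_mul_X_two_mem t))
  | 0, b + 1, c + 1 =>
    exact mkₐ_mem_span_milnorBasis_of_mem t
      (Ideal.mem_of_dvd _ ⟨X 1 ^ b * X 2 ^ c, by ring⟩ (X_one_mul_X_two_mem t))
  | 0, b + 3, 0 =>
    exact mkₐ_mem_span_milnorBasis_of_mem t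
      (Ideal.mem_of_dvd _ ⟨X 1 ^ b, by ring⟩ (X_one_pow_three_mem t))
  | 0, 0, c + 3 =>
    exact mkₐ_mem_span_milnorBasis_of_mem t
      (Ideal.mem_of_dvd _ ⟨X 2 ^ c, by ring⟩ (X_two_pow_three_mem t))
  | 0, 0, 0 => exact mkₐ_mem_span_milnorBasis t 0 1 (by simp [milnorMonomials])
  | 0, 1, 0 => exact mkₐ_mem_span_milnorBasis t 1 1 (by simp [milnorMonomials])
  | 0, 0, 1 => exact mkₐ_mem_span_milnorBasis t 2 1 (by simp [milnorMonomials])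
  | 1, 0, 0 => exact mkₐ_mem_span_milnorBasis t 3 1 (by simp [milnorMonomials])
  | 0, 2, 0 =>
    exact mkₐ_mem_span_milnorBasis t 3 (-6 * t)
      (by simpa [milnorMonomials, map_ofNat] using X_one_sq_add_mem t)
  | 0, 0, 2 =>
    exact mkₐ_mem_span_milnorBasis t 3 (-2)
      (by simpa [milnorMonomials, map_ofNat] using X_two_sq_add_mem t)

theorem span_milnorBasis : ⊤ ≤ Submodule.span ℂ (Set.range (milnorBasis t)) := by
  rintro _ -
  obtain ⟨p, rfl⟩ := Ideal.Quotient.mkₐ_surjective ℂ (augmentedJacobian t) ‹_›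
  have hp := Submodule.mem_map_of_mem
    (f := (Ideal.Quotient.mkₐ ℂ (augmentedJacobian t)).toLinearMap)
    ((basisMonomials (Fin 3) ℂ).mem_span p)
  rw [Submodule.map_span] at hp
  refine Submodule.span_le.mpr ?_ hp
  rintro _ ⟨_, ⟨u, rfl⟩, rfl⟩
  simp only [coe_basisMonomials, AlgHom.toLinearMap_apply]
  rw [monomial_eq, C_1, one_mul, Finsupp.prod_fintype _ _ fun i => pow_zero _,
    Fin.prod_univ_three]
  exact mkₐ_monomial_mem_span_milnorBasis t _ _ _

theorem finrank_quotient_augmentedJacobian :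
    Module.finrank ℂ (𝔸 ⧸ augmentedJacobian t) = 4 := by
  rw [Module.finrank_eq_card_basis (.mk (linearIndependent_milnorBasis t) (span_milnorBasis t)),
    Fintype.card_fin]

end Example86

/-- for every t ≠ 0, g = x² + xw² + z²w − tw³ has local Milnor number 4
    at the origin: dim_ℂ O/J(g)·O = 4 (the generic D₄ singularity at infinity of the
    fibres 𝕐_{0,t}, t ≠ 0, in Example 8.6). -/
theorem local_milnor_number_example86_generic (t : ℂ) (ht : t ≠ 0) :
    Module.finrank ℂ
      (Localization.AtPrime mOrigin₃ ⧸
        Ideal.map (algebraMap (MvPolynomial (Fin 3) ℂ) (Localization.AtPrime mOrigin₃))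
          (Ideal.span {pderiv 0 (g₈₆' t), pderiv 1 (g₈₆' t), pderiv 2 (g₈₆' t)})) = 4 := by
  rw [Example86.span_pderiv_g₈₆', ← Example86.map_augmentedJacobian t ht,
    finrank_quotient_map_of_le_radical mOrigin₃ (Example86.mOrigin₃_le_radical t)]
  exact Example86.finrank_quotient_augmentedJacobian t
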